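/- Let m > 2 be an integer and let Box = [−1, m−1] ⊆ ℝ. Let f be an integral concave piecewise-affine function on Box which is at height one and satisfies f(−1) = 0 and 0 < f(0) < 1 (i.e., f is non-integral). Then, up to shearing, f has one of two forms: there exist β ∈ ℤ and an integer λ ≥ 2 such that, setting g(x) = f(x) − β·(x+1), either (1) λ < m and g(x) = min{(x+1)/λ, 1} for all x ∈ [−1, m−1] (so g has a single vertex at x = λ − 1), or (2) λ divides m and g(x) = (x+1)/λ for all x ∈ [−1, m−1] (so g is a line). -/

import Mathlib

open scoped BigOperators

noncomputable section

/-- Embedding of a lattice point of `ℤ^d × ℤ` into `ℝ^d × ℝ`. -/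
def latticeEmbed (d : ℕ) (p : (Fin d → ℤ) × ℤ) : (Fin d → ℝ) × ℝ :=
  (fun i => (p.1 i : ℝ), (p.2 : ℝ))

/-- `Box ⊆ ℝ^d` is a lattice polytope: the convex hull of a finite set of lattice points. -/
def IsLatticePolytope (d : ℕ) (Box : Set (Fin d → ℝ)) : Prop :=
  ∃ S : Finset (Fin d → ℤ),
    Box = convexHull ℝ ((fun v : Fin d → ℤ => fun i => (v i : ℝ)) '' (S : Set (Fin d → ℤ)))

/-- The pairing of `x ∈ ℝ^d` with an integral vector `u ∈ ℤ^d`. -/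
def dotZ (d : ℕ) (x : Fin d → ℝ) (u : Fin d → ℤ) : ℝ := ∑ i, x i * (u i : ℝ)

/-- `f` is an integral concave piecewise-affine function on `Box`: there is a finite set
`S ⊆ ℤ^d × ℤ` such that `Box` is the projection of `conv S` and `f x` is the largest `t`
with `(x, t) ∈ conv S`. -/
def IsICPA (d : ℕ) (Box : Set (Fin d → ℝ)) (f : (Fin d → ℝ) → ℝ) : Prop :=
  ∃ S : Finset ((Fin d → ℤ) × ℤ),
    Prod.fst '' (convexHull ℝ (latticeEmbed d '' (S : Set ((Fin d → ℤ) × ℤ)))) = Box ∧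
    ∀ x ∈ Box,
      IsGreatest {t : ℝ | (x, t) ∈ convexHull ℝ (latticeEmbed d '' (S : Set ((Fin d → ℤ) × ℤ)))}
        (f x)

/-- Every facet of the graph of `f` lies at height one. -/
def AtHeightOne (d : ℕ) (Box : Set (Fin d → ℝ)) (f : (Fin d → ℝ) → ℝ) : Prop :=
  ∀ x ∈ Box, ∃ (u : Fin d → ℤ) (m : ℤ),
    |dotZ d x u + (m : ℝ) * f x| = 1 ∧
    ∀ y ∈ Box, dotZ d y u + (m : ℝ) * f y ≤ dotZ d x u + (m : ℝ) * f x

/-- A combinatorial divisorial polytope (CDP) with base in `ℝ^d`. -/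
structure CDP (d : ℕ) where
  box : Set (Fin d → ℝ)
  funcs : List ((Fin d → ℝ) → ℝ)
  lattice : IsLatticePolytope d box
  fullDim : (interior box).Nonempty
  icpa : ∀ f ∈ funcs, IsICPA d box f
  posSum : ∀ x ∈ interior box, 0 < (funcs.map (fun f => f x)).sum

/-- Two functions agree on a set. -/
def EqOnBox (d : ℕ) (B : Set (Fin d → ℝ)) (f g : (Fin d → ℝ) → ℝ) : Prop :=
  ∀ x ∈ B, f x = g x

/-- Move (i): addition of the zero function. -/
def MoveZero (d : ℕ) (P Q : CDP d) : Prop :=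
  Q.box = P.box ∧
    List.Forall₂ (EqOnBox d P.box) Q.funcs (P.funcs ++ [fun _ => (0 : ℝ)])

/-- Move (ii): permutation of the functions. -/
def MovePerm (d : ℕ) (P Q : CDP d) : Prop :=
  Q.box = P.box ∧ ∃ L, List.Perm L P.funcs ∧ List.Forall₂ (EqOnBox d P.box) Q.funcs L

/-- Move (iii): integral affine transformation of the base. -/
def MoveAffine (d : ℕ) (P Q : CDP d) : Prop :=
  ∃ (A B : Matrix (Fin d) (Fin d) ℤ) (t : Fin d → ℤ),
    A * B = 1 ∧ B * A = 1 ∧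
    Q.box = (fun x : Fin d → ℝ => fun i => (∑ j, (A i j : ℝ) * x j) + (t i : ℝ)) '' P.box ∧
    List.Forall₂ (EqOnBox d Q.box) Q.funcs
      (P.funcs.map (fun f => f ∘ fun x : Fin d → ℝ => fun i => ∑ j, (B i j : ℝ) * (x j - (t j : ℝ))))

/-- Move (iv): translation by integers summing to zero. -/
def MoveTranslate (d : ℕ) (P Q : CDP d) : Prop :=
  Q.box = P.box ∧ ∃ α : List ℤ, α.length = P.funcs.length ∧ α.sum = 0 ∧
    List.Forall₂ (EqOnBox d P.box) Q.funcs
      (List.zipWith (fun f (a : ℤ) => fun x => f x + (a : ℝ)) P.funcs α)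

/-- Move (v): shearing by a covector with integral coefficients summing to zero. -/
def MoveShear (d : ℕ) (P Q : CDP d) : Prop :=
  Q.box = P.box ∧ ∃ (v : Fin d → ℤ) (β : List ℤ), β.length = P.funcs.length ∧ β.sum = 0 ∧
    List.Forall₂ (EqOnBox d P.box) Q.funcs
      (List.zipWith (fun f (b : ℤ) => fun x => f x + (b : ℝ) * dotZ d x v) P.funcs β)

/-- One elementary move between CDPs. -/
def CDPMove (d : ℕ) (P Q : CDP d) : Prop :=
  MoveZero d P Q ∨ MovePerm d P Q ∨ MoveAffine d P Q ∨ MoveTranslate d P Q ∨ MoveShear d P Q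

/-- Equivalence of CDPs: the smallest equivalence relation generated by the moves. -/
def CDPEquiv (d : ℕ) : CDP d → CDP d → Prop := Relation.EqvGen (CDPMove d)

/-- The on-the-nose Fano conditions for a CDP. -/
def IsFanoWitness (d : ℕ) (P : CDP d) : Prop :=
  ∃ a : List ℤ, a.sum = -2 ∧
    (0 : Fin d → ℝ) ∈ interior P.box ∧
    List.Forall₂ (fun f (ai : ℤ) =>
      AtHeightOne d P.box (fun x => f x + (ai : ℝ) + 1) ∧ 0 < f 0 + (ai : ℝ) + 1)
      P.funcs a ∧
    ∀ x ∈ frontier P.box,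
      (P.funcs.map (fun f => f x)).sum = 0 ∨
      ∃ u : Fin d → ℤ, dotZ d x u = 1 ∧ ∀ y ∈ P.box, dotZ d y u ≤ 1

/-- A CDP is Fano if it is equivalent to one satisfying the Fano conditions. -/
def IsFano (d : ℕ) (P : CDP d) : Prop := ∃ Q : CDP d, CDPEquiv d P Q ∧ IsFanoWitness d Q

/-- A CDP is toric if it is equivalent to one with at most two functions. -/
def IsToric (d : ℕ) (P : CDP d) : Prop := ∃ Q : CDP d, CDPEquiv d P Q ∧ Q.funcs.length ≤ 2

/-- `f` agrees on `Box` with an affine function with integral slope and constant. -/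
def IsIntegralAffineOn (d : ℕ) (Box : Set (Fin d → ℝ)) (f : (Fin d → ℝ) → ℝ) : Prop :=
  ∃ (u : Fin d → ℤ) (c : ℤ), ∀ x ∈ Box, f x = dotZ d x u + (c : ℝ)

/-- Normalized Fano data on `Box`: the translated functions `Ψᵢ' = Ψᵢ + aᵢ + 1` of a
normalized Fano CDP. -/
def NormalizedFanoData (d n : ℕ) (Box : Set (Fin d → ℝ))
    (f : Fin n → (Fin d → ℝ) → ℝ) : Prop :=
  (∀ i, IsICPA d Box (f i)) ∧
  (∀ i, AtHeightOne d Box (f i)) ∧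
  (∀ i, 0 < f i 0) ∧
  (∀ i, ¬ IsIntegralAffineOn d Box (f i)) ∧
  (∀ x ∈ Box, (n : ℝ) - 2 ≤ ∑ i, f i x) ∧
  (∀ x ∈ interior Box, (n : ℝ) - 2 < ∑ i, f i x) ∧
  (∀ x ∈ frontier Box,
    (∑ i, f i x) = (n : ℝ) - 2 ∨
    ∃ u : Fin d → ℤ, dotZ d x u = 1 ∧ ∀ y ∈ Box, dotZ d y u ≤ 1)

/-- `α_v = min{1, max{α ≥ 0 : ±αv ∈ Box}}`. -/
def alphaV (d : ℕ) (Box : Set (Fin d → ℝ)) (v : Fin d → ℤ) : ℝ :=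
  min 1 (sSup {α : ℝ | 0 ≤ α ∧ (fun i => α * (v i : ℝ)) ∈ Box ∧
    (fun i => -(α * (v i : ℝ))) ∈ Box})

/-- A primitive integral vector: the gcd of its coordinates is 1. -/
def IsPrimitive (d : ℕ) (v : Fin d → ℤ) : Prop := Finset.univ.gcd v = 1

/-- `f` restricted to `Box ∩ ℝ·v` is affine. -/
def AffineOnLine (d : ℕ) (Box : Set (Fin d → ℝ)) (v : Fin d → ℤ)
    (f : (Fin d → ℝ) → ℝ) : Prop :=
  ∃ s c : ℝ, ∀ t : ℝ, (fun i => t * (v i : ℝ)) ∈ Box →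
    f (fun i => t * (v i : ℝ)) = s * t + c

/-- The interval `[a,b]` as a subset of `ℝ¹ = (Fin 1 → ℝ)`. -/
def intervalBox (a b : ℤ) : Set (Fin 1 → ℝ) := {p : Fin 1 → ℝ | (a : ℝ) ≤ p 0 ∧ p 0 ≤ (b : ℝ)}

/-- The `d`-dimensional cross polytope `conv{±e₁, …, ±e_d}`. -/
def crossPolytope (d : ℕ) : Set (Fin d → ℝ) :=
  convexHull ℝ {x : Fin d → ℝ | ∃ j : Fin d, x = Pi.single j 1 ∨ x = -Pi.single j 1}

/-
Write `φ t` for the value of `f` at the point `t` of `ℝ¹`. Then `φ` is concave, its graph is the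
upper boundary of the convex hull of finitely many lattice points, and each point of the graph has
a supporting line `U y + M s = ±1` with `U, M` integers. At `t = 0` this gives `M φ(0) = ±1`, so
`λ := |M| ≥ 2`.

If `M < 0`, the line lies below the concave graph and touches it at the interior point `0`, so `φ`
is the line `(y + 1) / λ`; integrality of the endpoint value `φ(m - 1) = m / λ` gives `λ ∣ m`.
If `M > 0`, the lattice points of the graph on the line force it to be `λ s = y + 1` and to contain
a lattice vertex `(k, φ k)` with `k ≥ 1`. Either `φ` stays on this line (again `λ ∣ m`), or at a
point `t` where `φ` drops below it the supporting line must be horizontal (the points `0` and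
`(k, φ k)` exclude the other slopes), and then integrality forces it to be `s = 1`. Hence
`φ ≤ 1 = φ(k)`, `λ = k + 1 < m`, and `φ = min ((y + 1) / λ, 1)`. No shearing is needed: `β = 0`.
-/
open Set

theorem Finset.mem_convexHull_filter_eq_of_forall_le {𝕜 E : Type*} [Field 𝕜] [LinearOrder 𝕜]
    [IsStrictOrderedRing 𝕜] [AddCommGroup E] [Module 𝕜 E] {S : Finset E} {p : E}
    (ℓ : E →ₗ[𝕜] 𝕜) (hp : p ∈ convexHull 𝕜 (S : Set E)) (hle : ∀ z ∈ S, ℓ z ≤ ℓ p) :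
    p ∈ convexHull 𝕜 (↑{z ∈ S | ℓ z = ℓ p} : Set E) := by
  classical
  obtain ⟨w, hw0, hw1, rfl⟩ := Finset.mem_convexHull'.1 hp
  -- the nonnegative gaps `ℓ p - ℓ z` have weighted sum zero, so weights vanish off the face
  have hgap : ∑ z ∈ S, w z * (ℓ (∑ y ∈ S, w y • y) - ℓ z) = 0 := by
    simp only [mul_sub, Finset.sum_sub_distrib, ← Finset.sum_mul, hw1, one_mul, map_sum,
      map_smul, smul_eq_mul, sub_self]
  have hw : ∀ z ∈ S, ℓ z ≠ ℓ (∑ y ∈ S, w y • y) → w z = 0 := fun z hz hne =>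
    (mul_eq_zero.1 ((Finset.sum_eq_zero_iff_of_nonneg fun y hy =>
      mul_nonneg (hw0 y hy) (sub_nonneg.2 (hle y hy))).1 hgap z hz)).resolve_right
      (sub_ne_zero.2 hne.symm)
  refine Finset.mem_convexHull'.2 ⟨w, fun z hz => hw0 z (Finset.mem_filter.1 hz).1, ?_, ?_⟩
  · rw [Finset.sum_filter_of_ne fun z hz h => by_contra fun hne => h (hw z hz hne), hw1]
  · rw [Finset.sum_filter_of_ne fun z hz h =>
      by_contra fun hne => h (by rw [hw z hz hne, zero_smul])]

theorem ConcaveOn.mul_add_linear {s : Set ℝ} {φ : ℝ → ℝ} (hφ : ConcaveOn ℝ s φ) {c : ℝ}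
    (hc : 0 ≤ c) (d e : ℝ) : ConcaveOn ℝ s fun y => c * φ y + d * y + e :=
  ((hφ.smul hc).add ((LinearMap.mulLeft ℝ d).concaveOn hφ.1)).add_const e

theorem ConcaveOn.eq_of_isMinOn_of_mem_Ioo {g : ℝ → ℝ} {a b t y : ℝ}
    (hg : ConcaveOn ℝ (Icc a b) g) (ht : t ∈ Ioo a b) (hmin : IsMinOn g (Icc a b) t)
    (hy : y ∈ Icc a b) : g y = g t := by
  have hab : a ≤ b := (ht.1.trans ht.2).le
  refine le_antisymm ?_ (hmin hy)
  rcases lt_trichotomy y t with hyt | rfl | hty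
  · refine hg.left_le_of_le_right hy (right_mem_Icc.2 hab) ?_ (hmin (right_mem_Icc.2 hab))
    rw [openSegment_eq_Ioo (hyt.trans ht.2)]
    exact ⟨hyt, ht.2⟩
  · exact le_rfl
  · refine hg.right_le_of_le_left (left_mem_Icc.2 hab) hy ?_ (hmin (left_mem_Icc.2 hab))
    rw [openSegment_eq_Ioo (ht.1.trans hty)]
    exact ⟨ht.1, hty⟩

theorem ConcaveOn.supporting_eq_of_nonpos {φ : ℝ → ℝ} {a b t U M : ℝ}
    (hφ : ConcaveOn ℝ (Icc a b) φ) (ht : t ∈ Ioo a b) (hM : M ≤ 0)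
    (hsupp : ∀ y ∈ Icc a b, U * y + M * φ y ≤ U * t + M * φ t) {y : ℝ} (hy : y ∈ Icc a b) :
    U * y + M * φ y = U * t + M * φ t := by
  have h := (hφ.mul_add_linear (neg_nonneg.2 hM) (-U) 0).eq_of_isMinOn_of_mem_Ioo ht
    (isMinOn_iff.2 fun z hz => by linarith [hsupp z hz]) hy
  linarith

theorem ConcaveOn.mul_eq_of_supporting_of_nonpos {φ : ℝ → ℝ} {b t U M lam : ℝ}
    (hφ : ConcaveOn ℝ (Icc (-1) b) φ) (ht : t ∈ Ioo (-1) b) (hb : 0 ≤ b) (hφm : φ (-1) = 0)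
    (hlam0 : lam * φ 0 = 1) (hM : M ≤ 0) (hW : U * t + M * φ t ≠ 0)
    (hsupp : ∀ y ∈ Icc (-1) b, U * y + M * φ y ≤ U * t + M * φ t) {y : ℝ}
    (hy : y ∈ Icc (-1) b) : lam * φ y = y + 1 := by
  have heq := fun z hz => hφ.supporting_eq_of_nonpos ht hM hsupp (y := z) hz
  have h1 := heq (-1) ⟨le_rfl, by linarith [ht.1, ht.2]⟩
  have h0 := heq 0 ⟨by norm_num, hb⟩
  rw [hφm, mul_zero, add_zero] at h1
  rw [mul_zero, zero_add] at h0
  -- the line through `(-1, 0)` and `(0, φ 0)` is `lam * s = y + 1`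
  exact mul_left_cancel₀ hW <| by
    linear_combination heq y hy + y * h1 + φ y * M * hlam0 - φ y * lam * h0

theorem two_le_of_mul_eq_one {lam : ℤ} {x : ℝ} (hx0 : 0 < x) (hx1 : x < 1) (h : lam * x = 1) :
    2 ≤ lam := by
  have : (1 : ℝ) < lam := by nlinarith
  exact_mod_cast this

def IsUpperBoundaryOn (C : Set (ℝ × ℝ)) (a b : ℝ) (φ : ℝ → ℝ) : Prop :=
  (∀ z ∈ C, z.1 ∈ Icc a b) ∧ ∀ t ∈ Icc a b, IsGreatest {s | (t, s) ∈ C} (φ t)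

namespace IsUpperBoundaryOn

variable {C : Set (ℝ × ℝ)} {a b : ℝ} {φ : ℝ → ℝ}

theorem mem (h : IsUpperBoundaryOn C a b φ) {t : ℝ} (ht : t ∈ Icc a b) : (t, φ t) ∈ C :=
  (h.2 t ht).1

theorem le (h : IsUpperBoundaryOn C a b φ) {z : ℝ × ℝ} (hz : z ∈ C) : z.2 ≤ φ z.1 :=
  (h.2 z.1 (h.1 z hz)).2 hz

theorem concaveOn (h : IsUpperBoundaryOn C a b φ) (hC : Convex ℝ C) :
    ConcaveOn ℝ (Icc a b) φ :=
  ⟨convex_Icc a b, fun _ hx _ hy _ _ hθ hη hθη => h.le (hC (h.mem hx) (h.mem hy) hθ hη hθη)⟩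

theorem le_of_eqOn_Ico (h : IsUpperBoundaryOn C a b φ) (hC : IsClosed C) {x : ℝ}
    (hx : x ∈ Ico a b) {g : ℝ → ℝ} (hg : Continuous g) (hφg : EqOn φ g (Ico x b)) :
    g b ≤ φ b := by
  have hgraph : Icc x b ⊆ (fun y => (y, g y)) ⁻¹' C := by
    rw [← closure_Ico hx.2.ne]
    refine (hC.preimage (continuous_id.prodMk hg)).closure_subset_iff.2 fun y hy => ?_
    rw [mem_preimage, ← hφg hy]
    exact h.mem ⟨hx.1.trans hy.1, hy.2.le⟩
  exact h.le (hgraph ⟨hx.2.le, le_rfl⟩)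

end IsUpperBoundaryOn

def IsLatticeUpperHull (a b : ℝ) (φ : ℝ → ℝ) : Prop :=
  ∃ S : Finset (ℝ × ℝ), (∀ z ∈ S, ∃ k l : ℤ, z = ((k : ℝ), (l : ℝ))) ∧
    IsUpperBoundaryOn (convexHull ℝ ↑S) a b φ

def HeightOneOn (a b : ℝ) (φ : ℝ → ℝ) : Prop :=
  ∀ x ∈ Icc a b, ∃ U M : ℤ, |U * x + M * φ x| = 1 ∧
    ∀ y ∈ Icc a b, U * y + M * φ y ≤ U * x + M * φ x

namespace IsLatticeUpperHull

variable {a b : ℝ} {m : ℤ} {φ : ℝ → ℝ}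

theorem concaveOn (h : IsLatticeUpperHull a b φ) : ConcaveOn ℝ (Icc a b) φ := by
  obtain ⟨S, -, hS⟩ := h
  exact hS.concaveOn (convex_convexHull ℝ _)

theorem le_of_eqOn_Ico (h : IsLatticeUpperHull a b φ) {x : ℝ} (hx : x ∈ Ico a b) {g : ℝ → ℝ}
    (hg : Continuous g) (hφg : EqOn φ g (Ico x b)) : g b ≤ φ b := by
  obtain ⟨S, -, hS⟩ := h
  exact hS.le_of_eqOn_Ico (S.finite_toSet.isClosed_convexHull (𝕜 := ℝ)) hx hg hφg

theorem exists_int_eq_right (h : IsLatticeUpperHull a b φ) (hab : a ≤ b) : ∃ l : ℤ, φ b = l := by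
  obtain ⟨S, hSℤ, hS⟩ := h
  have hface := S.mem_convexHull_filter_eq_of_forall_le (𝕜 := ℝ) (LinearMap.fst ℝ ℝ ℝ)
    (hS.mem ⟨hab, le_rfl⟩) fun z hz => (hS.1 z (subset_convexHull ℝ _ hz)).2
  obtain ⟨z, hz, hφz⟩ := ((LinearMap.snd ℝ ℝ ℝ).convexOn convex_univ).exists_ge_of_mem_convexHull
    (subset_univ _) hface
  rw [Finset.mem_coe, Finset.mem_filter] at hz
  simp only [LinearMap.coe_fst, LinearMap.coe_snd] at hz hφz
  obtain ⟨k, l, rfl⟩ := hSℤ z hz.1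
  refine ⟨l, le_antisymm hφz ?_⟩
  simpa [← hz.2] using hS.le (subset_convexHull ℝ _ hz.1)

theorem exists_int_on_supporting_line (h : IsLatticeUpperHull a b φ) {x U M : ℝ}
    (hx : x ∈ Icc a b) (hM : 0 < M) (hsupp : ∀ y ∈ Icc a b, U * y + M * φ y ≤ U * x + M * φ x) :
    (∃ k l : ℤ, (k : ℝ) ∈ Icc a x ∧ φ k = l ∧ U * k + M * l = U * x + M * φ x) ∧
      ∃ k l : ℤ, (k : ℝ) ∈ Icc x b ∧ φ k = l ∧ U * k + M * l = U * x + M * φ x := by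
  obtain ⟨S, hSℤ, hS⟩ := h
  let ℓ : ℝ × ℝ →ₗ[ℝ] ℝ := U • LinearMap.fst ℝ ℝ ℝ + M • LinearMap.snd ℝ ℝ ℝ
  have hℓ : ∀ z, ℓ z = U * z.1 + M * z.2 := fun z => rfl
  have hbelow : ∀ z ∈ convexHull ℝ (S : Set (ℝ × ℝ)), ℓ z ≤ U * z.1 + M * φ z.1 := fun z hz =>
    by rw [hℓ]; gcongr; exact hS.le hz
  have hface := S.mem_convexHull_filter_eq_of_forall_le ℓ (hS.mem hx) fun z hz =>
    (hbelow z (subset_convexHull ℝ _ hz)).trans (hsupp z.1 (hS.1 z (subset_convexHull ℝ _ hz)))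
  have htouch : ∀ z ∈ {z ∈ S | ℓ z = ℓ (x, φ x)}, ∃ k l : ℤ, z = ((k : ℝ), (l : ℝ)) ∧
      (k : ℝ) ∈ Icc a b ∧ φ k = l ∧ U * k + M * l = U * x + M * φ x := by
    intro z hz
    obtain ⟨hzS, hzℓ⟩ := Finset.mem_filter.1 hz
    obtain ⟨k, l, rfl⟩ := hSℤ z hzS
    have hzC := subset_convexHull ℝ _ hzS
    have hk := hS.1 _ hzC
    have hkl : U * k + M * l = U * x + M * φ x := by simpa only [hℓ] using hzℓ
    refine ⟨k, l, rfl, hk, le_antisymm ?_ (hS.le hzC), hkl⟩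
    have := hsupp k hk
    exact le_of_mul_le_mul_left (by linarith) hM
  constructor
  · obtain ⟨z, hz, hzx⟩ := ((LinearMap.fst ℝ ℝ ℝ).concaveOn convex_univ).exists_le_of_mem_convexHull
      (subset_univ _) hface
    obtain ⟨k, l, rfl, hk, hφk, hkl⟩ := htouch z hz
    exact ⟨k, l, ⟨hk.1, hzx⟩, hφk, hkl⟩
  · obtain ⟨z, hz, hzx⟩ := ((LinearMap.fst ℝ ℝ ℝ).convexOn convex_univ).exists_ge_of_mem_convexHull
      (subset_univ _) hface
    obtain ⟨k, l, rfl, hk, hφk, hkl⟩ := htouch z hz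
    exact ⟨k, l, ⟨hzx, hk.2⟩, hφk, hkl⟩

theorem dvd_and_eq_div_of_mul_eq (hφ : IsLatticeUpperHull (-1) (m - 1) φ) (hm : 0 < m)
    {lam : ℤ} (hlam : 0 < lam) (hup : ∀ y ∈ Icc (-1 : ℝ) (m - 1), lam * φ y ≤ y + 1)
    (hline : ∀ y ∈ Ico (-1 : ℝ) (m - 1), lam * φ y = y + 1) :
    lam ∣ m ∧ ∀ y ∈ Icc (-1 : ℝ) (m - 1), φ y = (y + 1) / lam := by
  have hmR : (0 : ℝ) < m := by exact_mod_cast hm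
  have hlamR : (0 : ℝ) < lam := by exact_mod_cast hlam
  have hend := hφ.le_of_eqOn_Ico (g := fun y => (y + 1) / lam) ⟨le_rfl, by linarith⟩
    (by fun_prop) fun y hy => by rw [eq_div_iff hlamR.ne', mul_comm]; exact hline y hy
  rw [div_le_iff₀ hlamR] at hend
  have hall : ∀ y ∈ Icc (-1 : ℝ) (m - 1), lam * φ y = y + 1 := fun y hy =>
    hy.2.lt_or_eq.elim (fun hym => hline y ⟨hy.1, hym⟩) fun hym =>
      le_antisymm (hup y hy) (by rw [hym]; linarith)
  obtain ⟨l, hl⟩ := hφ.exists_int_eq_right (by linarith)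
  have hml := hall (m - 1) ⟨by linarith, le_rfl⟩
  rw [hl, sub_add_cancel] at hml
  refine ⟨⟨l, by exact_mod_cast hml.symm⟩, fun y hy => ?_⟩
  rw [eq_div_iff hlamR.ne', mul_comm]
  exact hall y hy

theorem eq_neg_one_of_supporting_zero (hφ : IsLatticeUpperHull (-1) (m - 1) φ) (hm : 1 < m)
    (hφm : φ (-1) = 0) (hnint : ∀ l : ℤ, φ 0 ≠ l) {U lam : ℤ} (hlam : 0 < lam)
    (hlam0 : lam * φ 0 = 1)
    (hsupp : ∀ y ∈ Icc (-1 : ℝ) (m - 1), U * y + lam * φ y ≤ U * 0 + lam * φ 0) : U = -1 := by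
  have hmR : (1 : ℝ) < m := by exact_mod_cast hm
  obtain ⟨⟨k, l, hk, hφk, hkl⟩, -⟩ :=
    hφ.exists_int_on_supporting_line ⟨by norm_num, by linarith⟩ (by exact_mod_cast hlam) hsupp
  -- the lattice point of the graph on this line left of `0` is `(-1, 0)`, as `φ 0 ∉ ℤ`
  obtain rfl : k = -1 := by
    have : -1 ≤ k := by exact_mod_cast hk.1
    have : k ≤ 0 := by exact_mod_cast hk.2
    obtain rfl | rfl : k = -1 ∨ k = 0 := by omega
    · rfl
    · exact absurd (by simpa using hφk) (hnint l)
  rw [Int.cast_neg, Int.cast_one, hφm] at hφk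
  rw [← hφk] at hkl
  push_cast at hkl
  exact_mod_cast (by linarith : (U : ℝ) = -1)

theorem exists_vertex (hφ : IsLatticeUpperHull (-1) (m - 1) φ) (hm : 1 < m) (hφm : φ (-1) = 0)
    (hnint : ∀ l : ℤ, φ 0 ≠ l) {lam : ℤ} (hlam : 0 < lam) (hlam0 : lam * φ 0 = 1)
    (hup : ∀ y ∈ Icc (-1 : ℝ) (m - 1), lam * φ y ≤ y + 1) :
    ∃ k : ℤ, 1 ≤ k ∧ (k : ℝ) ≤ m - 1 ∧ 1 ≤ φ k ∧ ∀ y ∈ Icc (-1 : ℝ) k, lam * φ y = y + 1 := by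
  have hmR : (1 : ℝ) < m := by exact_mod_cast hm
  obtain ⟨-, k, l, hk, hφk, hkl⟩ := hφ.exists_int_on_supporting_line (x := 0) (U := -1)
    (M := lam) ⟨by norm_num, by linarith⟩ (by exact_mod_cast hlam) fun y hy => by
      linarith [hup y hy]
  rw [mul_zero, zero_add, hlam0] at hkl
  have hk1 : 1 ≤ k := by
    have : 0 ≤ k := by exact_mod_cast hk.1
    obtain rfl | hk1 := this.eq_or_lt
    · exact absurd (by simpa using hφk) (hnint l)
    · exact hk1
  have hk1R : (1 : ℝ) ≤ k := by exact_mod_cast hk1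
  have hl1 : 1 ≤ l := by
    have : lam * l = k + 1 := by exact_mod_cast (by linarith : (lam : ℝ) * l = k + 1)
    nlinarith
  refine ⟨k, hk1, hk.2, by rw [hφk]; exact_mod_cast hl1, fun y hy =>
    le_antisymm (hup y ⟨hy.1, hy.2.trans hk.2⟩) ?_⟩
  -- `lam * φ y - y - 1` is concave and vanishes at both ends of `[-1, k]`
  have hchord := (hφ.concaveOn.mul_add_linear (by positivity : (0 : ℝ) ≤ lam) (-1)
    (-1)).min_le_of_mem_Icc (left_mem_Icc.2 (by linarith)) ⟨by linarith, hk.2⟩ hy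
  have hleft : (lam : ℝ) * φ (-1) + -1 * -1 + -1 = 0 := by rw [hφm]; ring
  have hright : (lam : ℝ) * φ k + -1 * k + -1 = 0 := by rw [hφk]; linarith
  simp only [hleft, hright, min_self] at hchord
  linarith

theorem eq_one_of_mul_lt (hφ : IsLatticeUpperHull (-1) (m - 1) φ)
    (hht : HeightOneOn (-1) (m - 1) φ) (hφm : φ (-1) = 0) {lam : ℝ} (hlam : 0 < lam)
    (hlam0 : lam * φ 0 = 1) {k t : ℝ} (hk : 1 ≤ k) (hφk : 1 ≤ φ k) (hkt : k < t)
    (htm : t < m - 1) (hlt : lam * φ t < t + 1) :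
    φ t = 1 ∧ ∀ y ∈ Icc (-1 : ℝ) (m - 1), φ y ≤ 1 := by
  have hI : ∀ y, -1 ≤ y → y ≤ t → y ∈ Icc (-1 : ℝ) (m - 1) := fun y h h' =>
    ⟨h, h'.trans htm.le⟩
  have htI := hI t (by linarith) le_rfl
  have h0I := hI 0 (by norm_num) (by linarith)
  obtain ⟨U, M, hW, hsupp⟩ := hht t htI
  have hM : 0 < M := by
    by_contra! hM
    exact hlt.ne (hφ.concaveOn.mul_eq_of_supporting_of_nonpos ⟨by linarith, htm⟩ (by linarith)
      hφm hlam0 (by exact_mod_cast hM) (fun h => by simp [h] at hW) hsupp htI)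
  have hMR : (1 : ℝ) ≤ M := by exact_mod_cast hM
  have hφ0 : 0 < φ 0 := pos_of_mul_pos_right (hlam0 ▸ one_pos) hlam.le
  have hW1 : U * t + M * φ t = 1 := ((abs_eq zero_le_one).1 hW).resolve_right fun h => by
    nlinarith [hsupp 0 h0I, mul_pos (by linarith : (0 : ℝ) < M) hφ0]
  rw [hW1] at hsupp
  have hMlam : (M : ℝ) ≤ lam :=
    le_of_mul_le_mul_right (by linarith [hsupp 0 h0I] : (M : ℝ) * φ 0 ≤ lam * φ 0) hφ0
  rcases lt_trichotomy U 0 with hU | rfl | hU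
  · -- then `M * φ t ≥ t + 1 > lam * φ t`, which is incompatible with `M ≤ lam`
    have hUR : (U : ℝ) ≤ -1 := by exact_mod_cast (by omega : U ≤ -1)
    have hMt : t + 1 ≤ M * φ t := by nlinarith
    have hφt : 0 < φ t := pos_of_mul_pos_right (by linarith : (0 : ℝ) < M * φ t) (by linarith)
    nlinarith [mul_le_mul_of_nonneg_right hMlam hφt.le]
  · -- a horizontal supporting line `M * s = 1` through a lattice point forces `M = 1`
    obtain ⟨⟨k', l', -, -, hkl'⟩, -⟩ :=
      hφ.exists_int_on_supporting_line htI (M := M) (by exact_mod_cast hM) fun y hy =>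
        (hsupp y hy).trans hW1.ge
    simp only [Int.cast_zero, zero_mul, zero_add] at hkl' hW1 hsupp
    have hM1 : M = 1 := Int.eq_one_of_mul_eq_one_right hM.le (by exact_mod_cast hkl'.trans hW1)
    simp only [hM1, Int.cast_one, one_mul] at hW1 hsupp
    exact ⟨hW1, hsupp⟩
  · -- the lattice point `(k, φ k)` would lie above the supporting line
    have hUR : (1 : ℝ) ≤ U := by exact_mod_cast hU
    nlinarith [hsupp k (hI k (by linarith) hkt.le), mul_le_mul hUR hk zero_le_one (by linarith),
      mul_le_mul hMR hφk zero_le_one (by linarith)]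

theorem normal_form_of_mul_le (hφ : IsLatticeUpperHull (-1) (m - 1) φ)
    (hht : HeightOneOn (-1) (m - 1) φ) (hm : 1 < m) (hφm : φ (-1) = 0)
    (hnint : ∀ l : ℤ, φ 0 ≠ l) {lam : ℤ} (hlam : 0 < lam) (hlam0 : lam * φ 0 = 1)
    (hup : ∀ y ∈ Icc (-1 : ℝ) (m - 1), lam * φ y ≤ y + 1) :
    (lam < m ∧ ∀ y ∈ Icc (-1 : ℝ) (m - 1), φ y = min ((y + 1) / lam) 1) ∨
      (lam ∣ m ∧ ∀ y ∈ Icc (-1 : ℝ) (m - 1), φ y = (y + 1) / lam) := by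
  have hmR : (1 : ℝ) < m := by exact_mod_cast hm
  have hlamR : (0 : ℝ) < lam := by exact_mod_cast hlam
  obtain ⟨k, hk1, hkm, hφk, hleft⟩ := hφ.exists_vertex hm hφm hnint hlam hlam0 hup
  have hk1R : (1 : ℝ) ≤ k := by exact_mod_cast hk1
  have hflat := fun t (ht : t ∈ Ioo (k : ℝ) (m - 1)) (hlt : lam * φ t < t + 1) =>
    hφ.eq_one_of_mul_lt hht hφm hlamR hlam0 hk1R hφk ht.1 ht.2 hlt
  by_cases hbelow : ∃ t ∈ Ioo (k : ℝ) (m - 1), lam * φ t < t + 1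
  · left
    obtain ⟨t, ht, hlt⟩ := hbelow
    have hle1 := (hflat t ht hlt).2
    have hφk1 : φ k = 1 := le_antisymm (hle1 k ⟨by linarith, hkm⟩) hφk
    have hlamk : (lam : ℝ) = k + 1 := by simpa [hφk1] using hleft k ⟨by linarith, le_rfl⟩
    have hmid : ∀ y ∈ Ico (k : ℝ) (m - 1), φ y = 1 := by
      intro y hy
      have hyI : y ∈ Icc (-1 : ℝ) (m - 1) := ⟨by linarith [hy.1], hy.2.le⟩
      rcases hy.1.eq_or_lt with rfl | hky
      · exact hφk1
      rcases (hup y hyI).lt_or_eq with hlt' | heq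
      · exact (hflat y ⟨hky, hy.2⟩ hlt').1
      · nlinarith [hle1 y hyI]
    have hend : φ (m - 1) = 1 := le_antisymm (hle1 _ ⟨by linarith, le_rfl⟩)
      (hφ.le_of_eqOn_Ico (g := fun _ => 1) ⟨by linarith, by linarith [ht.1, ht.2]⟩ continuous_const
        hmid)
    refine ⟨by exact_mod_cast (by linarith [ht.1, ht.2] : (lam : ℝ) < m), fun y hy => ?_⟩
    rcases le_or_gt y k with hyk | hky
    · rw [min_eq_left ((div_le_one hlamR).2 (by linarith)), eq_div_iff hlamR.ne', mul_comm]
      exact hleft y ⟨hy.1, hyk⟩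
    · rw [min_eq_right ((one_le_div hlamR).2 (by linarith))]
      rcases hy.2.lt_or_eq with hym | rfl
      · exact hmid y ⟨hky.le, hym⟩
      · exact hend
  · right
    push Not at hbelow
    refine hφ.dvd_and_eq_div_of_mul_eq (by omega) hlam hup fun y hy =>
      (le_or_gt y k).elim (fun hyk => hleft y ⟨hy.1, hyk⟩) fun hky =>
        le_antisymm (hup y ⟨hy.1, hy.2.le⟩) (hbelow y ⟨hky, hy.2⟩)

theorem normal_form (hφ : IsLatticeUpperHull (-1) (m - 1) φ)
    (hht : HeightOneOn (-1) (m - 1) φ) (hm : 1 < m) (hφm : φ (-1) = 0) (h1 : 0 < φ 0)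
    (h2 : φ 0 < 1) :
    ∃ lam : ℤ, 2 ≤ lam ∧
      ((lam < m ∧ ∀ y ∈ Icc (-1 : ℝ) (m - 1), φ y = min ((y + 1) / lam) 1) ∨
        (lam ∣ m ∧ ∀ y ∈ Icc (-1 : ℝ) (m - 1), φ y = (y + 1) / lam)) := by
  have hmR : (1 : ℝ) < m := by exact_mod_cast hm
  have h0I : (0 : ℝ) ∈ Ioo (-1 : ℝ) (m - 1) := ⟨by norm_num, by linarith⟩
  have hnint : ∀ l : ℤ, φ 0 ≠ l := fun l hl => by
    rw [hl] at h1 h2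
    norm_cast at h1 h2
    omega
  obtain ⟨U, M, hW, hsupp⟩ := hht 0 (Ioo_subset_Icc_self h0I)
  rw [mul_zero, zero_add] at hW
  rcases lt_trichotomy M 0 with hM | rfl | hM
  · have hMR : (M : ℝ) < 0 := by exact_mod_cast hM
    have hMφ : (M : ℝ) * φ 0 = -1 :=
      ((abs_eq zero_le_one).1 hW).resolve_left fun h => by
        linarith [mul_neg_of_neg_of_pos hMR h1]
    have hline := fun y hy => hφ.concaveOn.mul_eq_of_supporting_of_nonpos h0I (by linarith) hφm
      (lam := ((-M : ℤ) : ℝ)) (by push_cast; linarith) hMR.le (by simp [hMφ]) hsupp (y := y) hy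
    refine ⟨-M, two_le_of_mul_eq_one h1 h2 (by push_cast; linarith), Or.inr ?_⟩
    exact hφ.dvd_and_eq_div_of_mul_eq (by omega) (by omega) (fun y hy => (hline y hy).le)
      fun y hy => hline y (Ico_subset_Icc_self hy)
  · simp at hW
  · have hMφ : (M : ℝ) * φ 0 = 1 :=
      ((abs_eq zero_le_one).1 hW).resolve_right (by nlinarith [(Int.cast_pos (R := ℝ)).2 hM])
    obtain rfl := hφ.eq_neg_one_of_supporting_zero hm hφm hnint hM hMφ hsupp
    refine ⟨M, two_le_of_mul_eq_one h1 h2 hMφ,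
      hφ.normal_form_of_mul_le hht hm hφm hnint hM hMφ fun y hy => ?_⟩
    have := hsupp y hy
    push_cast at this
    linarith

end IsLatticeUpperHull

theorem isLatticeUpperHull_of_isICPA {a b : ℤ} {f : (Fin 1 → ℝ) → ℝ}
    (hf : IsICPA 1 (intervalBox a b) f) : IsLatticeUpperHull a b fun t => f fun _ => t := by
  obtain ⟨S, hproj, hmax⟩ := hf
  let e : ((Fin 1 → ℝ) × ℝ) ≃ₗ[ℝ] ℝ × ℝ :=
    (LinearEquiv.funUnique (Fin 1) ℝ ℝ).prodCongr (LinearEquiv.refl ℝ ℝ)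
  have hC : convexHull ℝ ↑((S.image (latticeEmbed 1)).image e) =
      e '' convexHull ℝ (latticeEmbed 1 '' S) := by
    rw [Finset.coe_image, Finset.coe_image]
    exact (e.toLinearMap.image_convexHull _).symm
  refine ⟨(S.image (latticeEmbed 1)).image e, ?_, ?_⟩
  · intro z hz
    simp only [Finset.mem_image] at hz
    obtain ⟨_, ⟨p, -, rfl⟩, rfl⟩ := hz
    exact ⟨p.1 0, p.2, rfl⟩
  rw [hC]
  refine ⟨?_, fun t ht => ?_⟩
  · rintro _ ⟨w, hw, rfl⟩
    obtain ⟨h, h'⟩ : w.1 ∈ intervalBox a b := hproj ▸ ⟨w, hw, rfl⟩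
    exact ⟨h, h'⟩
  · convert hmax (fun _ => t) ⟨ht.1, ht.2⟩ using 2
    rw [e.image_eq_preimage_symm]
    rfl

theorem heightOneOn_of_atHeightOne {a b : ℤ} {f : (Fin 1 → ℝ) → ℝ}
    (hf : AtHeightOne 1 (intervalBox a b) f) : HeightOneOn a b fun t => f fun _ => t := by
  intro x hx
  obtain ⟨u, M, hW, hsupp⟩ := hf (fun _ => x) ⟨hx.1, hx.2⟩
  refine ⟨u 0, M, ?_, fun y hy => ?_⟩
  · simpa [dotZ, mul_comm] using hW
  · simpa [dotZ, mul_comm] using hsupp (fun _ => y) ⟨hy.1, hy.2⟩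

/-- A non-integral function of a normalized Fano CDP on `[-1, m-1]` with `f(-1) = 0` has,
up to shearing, one of two explicit forms. -/
theorem nonintegral_function_normal_form
    (m : ℤ) (hm : 2 < m)
    (f : (Fin 1 → ℝ) → ℝ)
    (hicpa : IsICPA 1 (intervalBox (-1) (m - 1)) f)
    (hht : AtHeightOne 1 (intervalBox (-1) (m - 1)) f)
    (hfm : f (fun _ => -1) = 0)
    (h1 : 0 < f 0) (h2 : f 0 < 1) :
    ∃ (β lam : ℤ), 2 ≤ lam ∧
      ((lam < m ∧ ∀ p ∈ intervalBox (-1) (m - 1),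
          f p - (β : ℝ) * (p 0 + 1) = min ((p 0 + 1) / (lam : ℝ)) 1) ∨
       (lam ∣ m ∧ ∀ p ∈ intervalBox (-1) (m - 1),
          f p - (β : ℝ) * (p 0 + 1) = (p 0 + 1) / (lam : ℝ))) := by
  have hφ := isLatticeUpperHull_of_isICPA hicpa
  have hφ1 := heightOneOn_of_atHeightOne hht
  push_cast at hφ hφ1
  obtain ⟨lam, hlam, hform⟩ := hφ.normal_form hφ1 (by omega) hfm h1 h2
  have hf : ∀ p ∈ intervalBox (-1) (m - 1),
      f p = f (fun _ => p 0) ∧ p 0 ∈ Icc (-1 : ℝ) (m - 1) := fun p hp =>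
    ⟨congrArg f (funext fun i => by rw [Subsingleton.elim i 0]), by simpa [intervalBox] using hp⟩
  refine ⟨0, lam, hlam, ?_⟩
  simp only [Int.cast_zero, zero_mul, sub_zero]
  refine hform.imp (And.imp_right fun h p hp => ?_) (And.imp_right fun h p hp => ?_) <;>
    rw [(hf p hp).1, h _ (hf p hp).2]

end
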